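/- Let γ : ℝ → ℝ⁵ be a smooth curve with γ(t) ≠ 0 and ⟨γ(t),γ(t)⟩ = 0 for all t (a curve in the light cone), and let σ : ℝ → ℝ⁵ be a smooth curve with ⟨σ(t),σ(t)⟩ = 1 and ⟨σ(t), γ^{(j)}(t)⟩ = 0 for j = 0,1,2,3 and all t (σ(t) is an osculating sphere at γ(t)). Fix t₀ and assume γ(t₀), γ'(t₀), γ''(t₀), γ'''(t₀) are linearly independent (t₀ is not a vertex). Then σ'(t₀) = 0 if and only if ⟨σ(t₀), γ''''(t₀)⟩ = 0 (i.e. if and only if the osculating sphere has contact of order at least 4 with the curve at t₀, a spherical point). -/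

import Mathlib

/-- The Lorentz bilinear form of signature (4,1) on ℝ⁵. -/
noncomputable def lorentz (x y : Fin 5 → ℝ) : ℝ :=
  x 0 * y 0 + x 1 * y 1 + x 2 * y 2 + x 3 * y 3 - x 4 * y 4

private lemma lorentz_comm (x y : Fin 5 → ℝ) : lorentz x y = lorentz y x := by
  unfold lorentz; ring

/-- `lorentz v ·` as a linear map. -/
noncomputable def lorentzR (v : Fin 5 → ℝ) : (Fin 5 → ℝ) →ₗ[ℝ] ℝ where
  toFun w := lorentz v w
  map_add' x y := by simp [lorentz]; ring
  map_smul' c x := by simp [lorentz]; ring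

@[simp] private lemma lorentzR_apply (v w : Fin 5 → ℝ) : lorentzR v w = lorentz v w := rfl

private lemma lorentz_zero_left (y : Fin 5 → ℝ) : lorentz 0 y = 0 := by simp [lorentz]

private lemma lorentz_nondegenerate (v : Fin 5 → ℝ) (h : ∀ w, lorentz v w = 0) : v = 0 := by
  funext i
  fin_cases i
  · simpa [lorentz, Pi.single_apply] using h (Pi.single 0 1)
  · simpa [lorentz, Pi.single_apply] using h (Pi.single 1 1)
  · simpa [lorentz, Pi.single_apply] using h (Pi.single 2 1)
  · simpa [lorentz, Pi.single_apply] using h (Pi.single 3 1)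
  · have := h (Pi.single 4 1)
    simp [lorentz, Pi.single_apply] at this
    simpa using this

private lemma hasDerivAt_lorentz {f g : ℝ → Fin 5 → ℝ} {f' g' : Fin 5 → ℝ} {t : ℝ}
    (hf : HasDerivAt f f' t) (hg : HasDerivAt g g' t) :
    HasDerivAt (fun s => lorentz (f s) (g s)) (lorentz f' (g t) + lorentz (f t) g') t := by
  have hfi := hasDerivAt_pi.1 hf
  have hgi := hasDerivAt_pi.1 hg
  have h0 := (hfi 0).mul (hgi 0)
  have h1 := (hfi 1).mul (hgi 1)
  have h2 := (hfi 2).mul (hgi 2)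
  have h3 := (hfi 3).mul (hgi 3)
  have h4 := (hfi 4).mul (hgi 4)
  have := (((h0.add h1).add h2).add h3).sub h4
  unfold lorentz
  exact this.congr_deriv (by ring)

private lemma deriv_pair_eq_zero {f g : ℝ → Fin 5 → ℝ} {f' g' : Fin 5 → ℝ} {t : ℝ} {c : ℝ}
    (hf : HasDerivAt f f' t) (hg : HasDerivAt g g' t)
    (h : ∀ s, lorentz (f s) (g s) = c) :
    lorentz f' (g t) + lorentz (f t) g' = 0 := by
  have h1 := hasDerivAt_lorentz hf hg
  have h2 : HasDerivAt (fun s => lorentz (f s) (g s)) 0 t := by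
    have he : (fun s => lorentz (f s) (g s)) = fun _ => c := funext h
    rw [he]; exact hasDerivAt_const _ _
  exact h1.unique h2

/-- At a non-vertex point, the path of osculating spheres has vanishing
derivative exactly at spherical points, i.e. where the osculating sphere has
contact of order at least 4 with the curve. -/
theorem osculating_sphere_stationary_iff_spherical_point
    (γ : ℝ → Fin 5 → ℝ) (hγ : ContDiff ℝ (⊤ : ℕ∞) γ)
    (hγne : ∀ t, γ t ≠ 0)
    (hγnull : ∀ t, lorentz (γ t) (γ t) = 0)
    (σ : ℝ → Fin 5 → ℝ) (hσ : ContDiff ℝ (⊤ : ℕ∞) σ)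
    (hunit : ∀ t, lorentz (σ t) (σ t) = 1)
    (hosc : ∀ t, lorentz (σ t) (γ t) = 0 ∧ lorentz (σ t) (deriv γ t) = 0 ∧
      lorentz (σ t) (deriv (deriv γ) t) = 0 ∧
      lorentz (σ t) (deriv (deriv (deriv γ)) t) = 0)
    (t₀ : ℝ)
    (hvertex_free : LinearIndependent ℝ
      ![γ t₀, deriv γ t₀, deriv (deriv γ) t₀, deriv (deriv (deriv γ)) t₀]) :
    deriv σ t₀ = 0 ↔ lorentz (σ t₀) (deriv (deriv (deriv (deriv γ))) t₀) = 0 := by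
  -- smoothness of iterated derivatives
  have hγ0 : ContDiff ℝ (↑(⊤ : ℕ∞)) γ := hγ.of_le (by simp)
  have hσ0 : ContDiff ℝ (↑(⊤ : ℕ∞)) σ := hσ.of_le (by simp)
  have hγ1 : ContDiff ℝ (↑(⊤ : ℕ∞)) (deriv γ) := (contDiff_infty_iff_deriv.mp hγ0).2
  have hγ2 : ContDiff ℝ (↑(⊤ : ℕ∞)) (deriv (deriv γ)) := (contDiff_infty_iff_deriv.mp hγ1).2
  have hγ3 : ContDiff ℝ (↑(⊤ : ℕ∞)) (deriv (deriv (deriv γ))) := (contDiff_infty_iff_deriv.mp hγ2).2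
  have H0 : HasDerivAt γ (deriv γ t₀) t₀ := ((hγ0.differentiable (by simp)) t₀).hasDerivAt
  have H1 : HasDerivAt (deriv γ) (deriv (deriv γ) t₀) t₀ :=
    ((hγ1.differentiable (by simp)) t₀).hasDerivAt
  have H2 : HasDerivAt (deriv (deriv γ)) (deriv (deriv (deriv γ)) t₀) t₀ :=
    ((hγ2.differentiable (by simp)) t₀).hasDerivAt
  have H3 : HasDerivAt (deriv (deriv (deriv γ))) (deriv (deriv (deriv (deriv γ))) t₀) t₀ :=
    ((hγ3.differentiable (by simp)) t₀).hasDerivAt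
  have Hσ : HasDerivAt σ (deriv σ t₀) t₀ := ((hσ0.differentiable (by simp)) t₀).hasDerivAt
  set s := σ t₀ with hs
  set s' := deriv σ t₀ with hs'
  obtain ⟨o0, o1, o2, o3⟩ := hosc t₀
  -- derived orthogonality relations
  have E0 : lorentz s' (γ t₀) + lorentz s (deriv γ t₀) = 0 :=
    deriv_pair_eq_zero Hσ H0 (fun u => (hosc u).1)
  have E1 : lorentz s' (deriv γ t₀) + lorentz s (deriv (deriv γ) t₀) = 0 :=
    deriv_pair_eq_zero Hσ H1 (fun u => (hosc u).2.1)
  have E2 : lorentz s' (deriv (deriv γ) t₀) + lorentz s (deriv (deriv (deriv γ)) t₀) = 0 :=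
    deriv_pair_eq_zero Hσ H2 (fun u => (hosc u).2.2.1)
  have E3 : lorentz s' (deriv (deriv (deriv γ)) t₀)
      + lorentz s (deriv (deriv (deriv (deriv γ))) t₀) = 0 :=
    deriv_pair_eq_zero Hσ H3 (fun u => (hosc u).2.2.2)
  have Eσ : lorentz s' s = 0 := by
    have := deriv_pair_eq_zero Hσ Hσ hunit
    rw [lorentz_comm s s'] at this
    linarith
  have e0 : lorentz s' (γ t₀) = 0 := by rw [o1] at E0; linarith
  have e1 : lorentz s' (deriv γ t₀) = 0 := by rw [o2] at E1; linarith
  have e2 : lorentz s' (deriv (deriv γ) t₀) = 0 := by rw [o3] at E2; linarith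
  constructor
  · intro h
    rw [h] at E3
    rw [lorentz_zero_left] at E3
    linarith
  · intro h
    have e3 : lorentz s' (deriv (deriv (deriv γ)) t₀) = 0 := by rw [h] at E3; linarith
    -- the five vectors span ℝ⁵
    set v : Fin 5 → (Fin 5 → ℝ) :=
      ![s, γ t₀, deriv γ t₀, deriv (deriv γ) t₀, deriv (deriv (deriv γ)) t₀] with hv
    have hnotmem : s ∉ Submodule.span ℝ (Set.range
        ![γ t₀, deriv γ t₀, deriv (deriv γ) t₀, deriv (deriv (deriv γ)) t₀]) := by
      intro hmem
      have hker : Submodule.span ℝ (Set.range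
          ![γ t₀, deriv γ t₀, deriv (deriv γ) t₀, deriv (deriv (deriv γ)) t₀])
          ≤ LinearMap.ker (lorentzR s) := by
        rw [Submodule.span_le]
        rintro x ⟨i, rfl⟩
        fin_cases i <;> simp [hs, o0, o1, o2, o3]
      have := hker hmem
      rw [LinearMap.mem_ker] at this
      rw [lorentzR_apply] at this
      rw [hunit t₀] at this
      exact one_ne_zero this
    have hli : LinearIndependent ℝ v := by
      rw [hv]
      exact linearIndependent_fin_cons.mpr ⟨hvertex_free, hnotmem⟩
    have hspan : Submodule.span ℝ (Set.range v) = ⊤ :=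
      hli.span_eq_top_of_card_eq_finrank (by simp [Module.finrank_pi])
    have hall : ∀ w, lorentz s' w = 0 := by
      intro w
      have hker : Submodule.span ℝ (Set.range v) ≤ LinearMap.ker (lorentzR s') := by
        rw [Submodule.span_le]
        rintro x ⟨i, rfl⟩
        fin_cases i <;> simp [hv, Eσ, e0, e1, e2, e3]
      have hw : w ∈ Submodule.span ℝ (Set.range v) := by rw [hspan]; trivial
      simpa using hker hw
    exact lorentz_nondegenerate s' hall
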